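/- Consider the palette gadget P: take binom(i,2)·j+1 disjoint copies of T(i-2,j) together with three additional vertices u1, u2, u3, each adjacent to every vertex of the copies but not to each other. Then in any (i,j)-coloring of P (with i ≥ 3), at least two of the vertices u1, u2, u3 receive the same color. -/

import Mathlib

/-- Vertex type of the graph `T(n+1, j)` of the paper. -/
def TV : ℕ → ℕ → Type
  | 0, _ => Unit
  | n + 1, j => Option (Fin (j + 1) × TV n j)

/-- The graph `T(n+1, j)`: `Tgraph 0 j = K₁`; `Tgraph (n+1) j` is `j+1` disjoint copies of
`Tgraph n j` together with a universal vertex. -/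
def Tgraph : (n : ℕ) → (j : ℕ) → SimpleGraph (TV n j)
  | 0, _ => ⊥
  | n + 1, j => SimpleGraph.fromRel (fun a b =>
      match a, b with
      | none, _ => True
      | some _, none => False
      | some p, some q => p.1 = q.1 ∧ (Tgraph n j).Adj p.2 q.2)

/-- Vertex type of the palette gadget `P(u₁, u₂, u₃, i, j)` with `i = m + 3`:
three endpoint vertices plus `C(i,2)·j + 1` disjoint copies of `T(i-2, j) = Tgraph m j`. -/
def PV (m j : ℕ) : Type := (Fin 3) ⊕ (Fin ((m + 3).choose 2 * j + 1) × TV m j)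

/-- The palette gadget `P(u₁, u₂, u₃, i, j)` with `i = m + 3`: `C(i,2)·j + 1` disjoint copies
of `T(i-2, j)`, together with three vertices `u₁, u₂, u₃` adjacent to every vertex of the
copies but not to each other. -/
def Pgraph (m j : ℕ) : SimpleGraph (PV m j) :=
  SimpleGraph.fromRel (fun a b =>
    match a, b with
    | Sum.inl _, Sum.inr _ => True
    | Sum.inr p, Sum.inr q => p.1 = q.1 ∧ (Tgraph m j).Adj p.2 q.2
    | _, _ => False)

/-
Every `(C, j)`-coloring of `T(n, j)` uses at least `n` colours: the universal vertex has at most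
`j` neighbours of its own colour, so one of the `j + 1` copies of `T(n-1, j)` avoids that colour,
and induction applies to it. So each copy of `T(i-2, j)` in the gadget misses at most two of the
`i` colours. If `u₁, u₂, u₃` had three distinct colours, every copy would therefore contain a
vertex coloured like some `uₐ`; as there are more than `3j` copies, some `uₐ` would see more
than `j` neighbours of its own colour.
-/

namespace SimpleGraph

variable {V W C : Type*}

/-- A `(C, D)`-coloring of the paper is an `f : V → Fin C` with `G.IsDefectiveColoring f D`. -/
def IsDefectiveColoring (G : SimpleGraph V) (f : V → C) (d : ℕ) : Prop :=
  ∀ v, {u | G.Adj v u ∧ f u = f v}.ncard ≤ d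

variable {G : SimpleGraph V} {f : V → C} {d : ℕ}

theorem IsDefectiveColoring.card_le_of_injective [Finite V] (hf : G.IsDefectiveColoring f d)
    {v : V} {ι : Type*} {φ : ι → V} (hφ : Function.Injective φ)
    (hadj : ∀ i, G.Adj v (φ i)) (hcol : ∀ i, f (φ i) = f v) : Nat.card ι ≤ d :=
  calc Nat.card ι = (Set.range φ).ncard := (Set.ncard_range_of_injective hφ).symm
    _ ≤ {u | G.Adj v u ∧ f u = f v}.ncard :=
        Set.ncard_le_ncard (by rintro _ ⟨i, rfl⟩; exact ⟨hadj i, hcol i⟩)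
    _ ≤ d := hf v

theorem IsDefectiveColoring.comap [Finite V] {G' : SimpleGraph W}
    (hf : G.IsDefectiveColoring f d) (φ : G' →g G) (hφ : Function.Injective φ) :
    G'.IsDefectiveColoring (f ∘ φ) d := fun v => by
  rw [← Nat.card_coe_set_eq]
  exact hf.card_le_of_injective (φ := fun u : {u | G'.Adj v u ∧ f (φ u) = f (φ v)} => φ u)
    (hφ.comp Subtype.val_injective) (fun u => φ.map_adj u.2.1) (fun u => u.2.2)

end SimpleGraph

theorem Set.inter_nonempty_of_card_lt_ncard_add_ncard {α : Type*} [Finite α] {s t : Set α}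
    (h : Nat.card α < s.ncard + t.ncard) : (s ∩ t).Nonempty := by
  rw [Set.nonempty_iff_ne_empty]
  intro hst
  have := Set.ncard_union_eq (Set.disjoint_iff_inter_eq_empty.mpr hst)
  have := Set.ncard_le_card (s ∪ t)
  omega

open SimpleGraph

instance TV.finite : ∀ m j, Finite (TV m j)
  | 0, _ => inferInstanceAs (Finite Unit)
  | m + 1, j =>
      haveI := TV.finite m j
      inferInstanceAs (Finite (Option (Fin (j + 1) × TV m j)))

instance PV.finite (m j : ℕ) : Finite (PV m j) :=
  inferInstanceAs (Finite (Fin 3 ⊕ (Fin ((m + 3).choose 2 * j + 1) × TV m j)))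

namespace Tgraph

variable {m j : ℕ}

theorem adj_none_some (p : Fin (j + 1) × TV m j) : (Tgraph (m + 1) j).Adj none (some p) :=
  (fromRel_adj ..).mpr ⟨nofun, Or.inl trivial⟩

def copy (k : Fin (j + 1)) : Tgraph m j →g Tgraph (m + 1) j where
  toFun v := some (k, v)
  map_rel' h := (fromRel_adj ..).mpr
    ⟨fun he => h.ne (congrArg Prod.snd (Option.some.inj he)), Or.inl ⟨rfl, h⟩⟩

theorem copy_injective (k : Fin (j + 1)) : Function.Injective (copy (m := m) k) :=
  fun _ _ h => congrArg Prod.snd (Option.some.inj h)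

theorem succ_le_ncard_range {C : Type*} {g : TV m j → C}
    (hg : (Tgraph m j).IsDefectiveColoring g j) : m + 1 ≤ (Set.range g).ncard := by
  induction m with
  | zero => exact (Set.ncard_pos).mpr ⟨g (), (), rfl⟩
  | succ m ih =>
    have ⟨k, hk⟩ : ∃ k : Fin (j + 1), g none ∉ Set.range (g ∘ copy k) := by
      by_contra! h
      choose v hv using h
      have := hg.card_le_of_injective (v := none) (φ := fun k => copy k (v k))
        (fun _ _ h => congrArg Prod.fst (Option.some.inj h))
        (fun k => adj_none_some _) hv
      rw [Nat.card_fin] at this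
      omega
    have hsub : insert (g none) (Set.range (g ∘ copy k)) ⊆ Set.range g :=
      Set.insert_subset (Set.mem_range_self _) (Set.range_comp_subset_range _ _)
    calc m + 1 + 1 ≤ (Set.range (g ∘ copy k)).ncard + 1 :=
          Nat.succ_le_succ (ih (hg.comap (copy k) (copy_injective k)))
      _ = (insert (g none) (Set.range (g ∘ copy k))).ncard := (Set.ncard_insert_of_notMem hk).symm
      _ ≤ (Set.range g).ncard := Set.ncard_le_ncard hsub

end Tgraph

namespace Pgraph

variable {m j : ℕ}

theorem adj_inl_inr (a : Fin 3) (p : Fin ((m + 3).choose 2 * j + 1) × TV m j) :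
    (Pgraph m j).Adj (Sum.inl a) (Sum.inr p) :=
  (fromRel_adj ..).mpr ⟨Sum.inl_ne_inr, Or.inl trivial⟩

def copy (k : Fin ((m + 3).choose 2 * j + 1)) : Tgraph m j →g Pgraph m j where
  toFun v := Sum.inr (k, v)
  map_rel' h := (fromRel_adj ..).mpr
    ⟨fun he => h.ne (congrArg Prod.snd (Sum.inr.inj he)), Or.inl ⟨rfl, h⟩⟩

theorem copy_injective (k : Fin ((m + 3).choose 2 * j + 1)) :
    Function.Injective (copy (m := m) k) :=
  fun _ _ h => congrArg Prod.snd (Sum.inr.inj h)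

end Pgraph

/-- In any `(i, j)`-coloring of the palette gadget (here `i = m + 3 ≥ 3`), at least two of
the three endpoints `u₁, u₂, u₃` receive the same color. -/
theorem paletteGadget_forces_share (m j : ℕ) (f : PV m j → Fin (m + 3))
    (hf : ∀ v : PV m j, {u | (Pgraph m j).Adj v u ∧ f u = f v}.ncard ≤ j) :
    f (Sum.inl 0) = f (Sum.inl 1) ∨ f (Sum.inl 0) = f (Sum.inl 2) ∨
      f (Sum.inl 1) = f (Sum.inl 2) := by
  replace hf : (Pgraph m j).IsDefectiveColoring f j := hf
  by_contra! ⟨h01, h02, h12⟩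
  set palette := Set.range fun a : Fin 3 => f (Sum.inl a)
  have hpalette : palette.ncard = 3 := by
    refine (Set.ncard_range_of_injective fun a b hab => ?_).trans (by simp)
    fin_cases a <;> fin_cases b <;> simp_all [eq_comm]
  have hmeet : ∀ k, ∃ a : Fin 3, ∃ v, f (Pgraph.copy k v) = f (Sum.inl a) := fun k => by
    have hk := Tgraph.succ_le_ncard_range (hf.comap (Pgraph.copy k) (Pgraph.copy_injective k))
    obtain ⟨_, ⟨v, rfl⟩, a, ha⟩ := Set.inter_nonempty_of_card_lt_ncard_add_ncard
      (s := Set.range (f ∘ Pgraph.copy k)) (t := palette) (by rw [hpalette, Nat.card_fin]; omega)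
    exact ⟨a, v, ha.symm⟩
  choose a v hv using hmeet
  have hcopies : Fintype.card (Fin 3) * j < Fintype.card (Fin ((m + 3).choose 2 * j + 1)) := by
    have : 3 ≤ (m + 3).choose 2 := Nat.choose_le_choose 2 (by omega : 3 ≤ m + 3)
    simp only [Fintype.card_fin]
    nlinarith
  obtain ⟨a₀, ha₀⟩ := Fintype.exists_lt_card_fiber_of_mul_lt_card a hcopies
  have := hf.card_le_of_injective (v := Sum.inl a₀)
    (φ := fun k : {k // a k = a₀} => Pgraph.copy k (v k))
    (fun _ _ h => Subtype.ext (congrArg Prod.fst (Sum.inr.inj h)))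
    (fun k => Pgraph.adj_inl_inr _ _)
    (fun k => (hv k).trans (congrArg (fun a => f (Sum.inl a)) k.2))
  rw [Nat.card_eq_fintype_card, Fintype.card_subtype] at this
  omega
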